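/- arXiv:math/0606215 — 2 statements merged into one kernel-verified Lean document; each statement's English description precedes it below -/
import Mathlib

section
/- Let n ≥ 1 be an integer, let q be a real number with 0 < q < 1, and let ν, μ ∈ Λ_n be partitions with |μ| ≤ |ν| and μ ≠ ν. Then 𝔰_ν(q^{2(μ+δ)}; q²) = 0; equivalently, det( ∏_{m=0}^{ν_j+n−j−1} (q^{2(μ_i+n−i)} − q^{2m}) )_{1≤i,j≤n} = 0. -/
open BigOperators Finset

/-- The q-factorial Schur polynomial `𝔰_ν(x; q)` evaluated at a point
`x = (x_1, …, x_n)` (with pairwise distinct coordinates):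
`det( ∏_{m=0}^{ν_j+n−j−1} (x_i − q^m) ) / ∏_{i<j} (x_i − x_j)`.
Here indices are 0-based, so the number of factors in the `j`-th column
is `ν j + (n - 1 - j)`. -/
noncomputable def qfactSchur (n : ℕ) (q : ℝ) (ν : Fin n → ℕ) (x : Fin n → ℝ) : ℝ :=
  (Matrix.det (Matrix.of fun i j : Fin n =>
      ∏ m ∈ Finset.range (ν j + (n - 1 - (j : ℕ))), (x i - q ^ m))) /
    ∏ i : Fin n, ∏ j ∈ Finset.Ioi i, (x i - x j)

/-- The interpolation point `q^{2(μ+δ)} = (q^{2(μ_1+n−1)}, …, q^{2μ_n})`. -/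
noncomputable def qPoint (n : ℕ) (q : ℝ) (μ : Fin n → ℕ) : Fin n → ℝ :=
  fun i => q ^ (2 * (μ i + (n - 1 - (i : ℕ))))

/-!
Take `r` with `μ r < ν r`, which exists since `|μ| ≤ |ν|` and `μ ≠ ν`. For `j ≤ r ≤ i`, the
entry in row `i` and column `j` contains the factor `q^{2(μ_i+n-1-i)} - q^{2m}` with
`m = μ_i + n-1-i`, and `m < ν_j + n-1-j` because `μ_i ≤ μ_r < ν_r ≤ ν_j` and `j ≤ i`.
So rows `r, …, n-1` vanish on columns `0, …, r`: a zero block of size `(n-r) × (r+1)`,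
which forces the determinant to vanish since every permutation meets it.
-/

theorem Finset.exists_lt_of_sum_le_of_ne {ι M : Type*} [Fintype ι]
    [AddCommMonoid M] [LinearOrder M] [IsOrderedCancelAddMonoid M] {f g : ι → M}
    (hle : ∑ i, f i ≤ ∑ i, g i) (hne : f ≠ g) : ∃ i, f i < g i := by
  by_contra! h
  have hsum : ∑ i, g i = ∑ i, f i := le_antisymm (sum_le_sum fun i _ => h i) hle
  exact hne (funext fun i => ((sum_eq_sum_iff_of_le fun i _ => h i).1 hsum i (mem_univ i)).symm)

theorem Matrix.det_eq_zero_of_card_lt_of_eq_zero {ι R : Type*} [Fintype ι] [DecidableEq ι]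
    [CommRing R] (A : Matrix ι ι R) (s t : Finset ι) (hcard : #t < #s)
    (hA : ∀ j ∈ s, ∀ i ∉ t, A i j = 0) : A.det = 0 := by
  rw [Matrix.det_apply]
  refine sum_eq_zero fun σ _ => ?_
  obtain ⟨j, hj, hσj⟩ : ∃ j ∈ s, σ j ∉ t := by
    by_contra! h
    obtain ⟨x, -, y, -, hxy, hσ⟩ := exists_ne_map_eq_of_card_lt_of_maps_to hcard h
    exact hxy (σ.injective hσ)
  exact smul_eq_zero_of_right _ (prod_eq_zero (mem_univ j) (hA j hj _ hσj))

theorem prod_range_pow_sub_pow_eq_zero {R : Type*} [CommRing R] (x : R) {k N : ℕ}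
    (hk : k < N) : ∏ m ∈ range N, (x ^ k - x ^ m) = 0 :=
  prod_eq_zero (mem_range.2 hk) (sub_self _)

theorem qfactSchur_vanishing_general (n : ℕ) (q : ℝ)
    (ν μ : Fin n → ℕ) (hν : Antitone ν) (hμ : Antitone μ)
    (hle : ∑ i, μ i ≤ ∑ i, ν i) (hne : μ ≠ ν) :
    qfactSchur n (q ^ 2) ν (qPoint n q μ) = 0 ∧
    Matrix.det (Matrix.of fun i j : Fin n =>
        ∏ m ∈ Finset.range (ν j + (n - 1 - (j : ℕ))), (qPoint n q μ i - (q ^ 2) ^ m)) = 0 := by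
  obtain ⟨r, hr⟩ := exists_lt_of_sum_le_of_ne hle hne
  have hdet : Matrix.det (Matrix.of fun i j : Fin n =>
      ∏ m ∈ Finset.range (ν j + (n - 1 - (j : ℕ))), (qPoint n q μ i - (q ^ 2) ^ m)) = 0 := by
    refine Matrix.det_eq_zero_of_card_lt_of_eq_zero _ (Iic r) (Iio r)
      (by rw [Fin.card_Iio, Fin.card_Iic]; omega) fun j hj i hi => ?_
    rw [mem_Iic] at hj
    rw [mem_Iio, not_lt] at hi
    have hμi : μ i ≤ μ r := hμ hi
    have hνj : ν r ≤ ν j := hν hj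
    have hji : (j : ℕ) ≤ i := hj.trans hi
    have hin : (i : ℕ) < n := i.isLt
    rw [Matrix.of_apply, qPoint, pow_mul]
    exact prod_range_pow_sub_pow_eq_zero _ (by omega)
  refine ⟨?_, hdet⟩
  rw [qfactSchur, hdet, zero_div]

/-- the extra vanishing property of q²-factorial Schur polynomials:
if `μ, ν ∈ Λ_n` are partitions with `|μ| ≤ |ν|` and `μ ≠ ν`, then
`𝔰_ν(q^{2(μ+δ)}; q²) = 0`; equivalently the defining determinant vanishes. -/
theorem qfactSchur_vanishing (n : ℕ) (hn : 1 ≤ n) (q : ℝ) (hq0 : 0 < q) (hq1 : q < 1)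
    (ν μ : Fin n → ℕ) (hν : Antitone ν) (hμ : Antitone μ)
    (hle : ∑ i, μ i ≤ ∑ i, ν i) (hne : μ ≠ ν) :
    qfactSchur n (q ^ 2) ν (qPoint n q μ) = 0 ∧
    Matrix.det (Matrix.of fun i j : Fin n =>
        ∏ m ∈ Finset.range (ν j + (n - 1 - (j : ℕ))), (qPoint n q μ i - (q ^ 2) ^ m)) = 0 :=
  qfactSchur_vanishing_general n q ν μ hν hμ hle hne
end

section
/- Let n ≥ 1 be an integer, let q be a real number with 0 < q < 1, and let ν ∈ Λ_n be a partition. Let S_ν denote the symmetric polynomial in n variables over ℝ of total degree |ν| satisfying S_ν(X) · ∏_{1≤i<j≤n} (X_i − X_j) = det( ∏_{m=0}^{ν_j+n−j−1} (X_i − (q²)^m) )_{1≤i,j≤n} in ℝ[X_1, …, X_n] (so that S_ν(x) = 𝔰_ν(x; q²) at points with pairwise distinct coordinates). If p is any symmetric polynomial in n variables over ℝ of total degree at most |ν| such that p(q^{2(μ+δ)}) = 0 for every partition μ ∈ Λ_n with |μ| ≤ |ν| and μ ≠ ν, then there exists a constant c ∈ ℝ with p = c · S_ν. In other words, 𝔰_ν(·;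 q²) is the unique symmetric polynomial of degree |ν|, up to a constant multiplier, vanishing at all the points q^{2(μ+δ)} with |μ| ≤ |ν| and μ ≠ ν. -/
/-!
Fix `t` with pairwise distinct powers (here `t = q²`) and call the points `c • t ^ (μ + δ)`, for
partitions `μ`, the nodes of scale `c ≠ 0`. A symmetric polynomial `f` in `n` variables of degree
`≤ d` vanishing at all nodes with `|μ| ≤ d` is zero, by induction on `n` and `d`: the nodes with
`μₙ = 0` are `(x, c)` for `x` a node in `n - 1` variables of scale `c * t`, so `f` vanishes on
`Xₙ = c`; by symmetry `f = ∏ⱼ (Xⱼ - c) * g`, and `g` has degree `≤ d - n` and vanishes at the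
nodes `c • t ^ (μ + 1 + δ) = (c * t) • t ^ (μ + δ)`.

At `t ^ (ν + δ)` the determinant defining `S` is triangular with nonzero diagonal, while at
`t ^ (μ + δ)` it has a zero block of size `(n - k) × (k + 1)` whenever `μₖ < νₖ`, which happens
for `μ ≠ ν` with `|μ| ≤ |ν|`. Hence `p - (p / S)(t ^ (ν + δ)) • S` vanishes at all nodes of
scale `1` with `|μ| ≤ |ν|`.
-/

open BigOperators Finset MvPolynomial

open Function (Injective update)

namespace MvPolynomial

section CommSemiring

variable {R σ τ : Type*} [CommSemiring R]

theorem eval_aeval (x : τ → R) (s : σ → MvPolynomial τ R) (f : MvPolynomial σ R) :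
    eval x (aeval s f) = eval (fun i => eval x (s i)) f :=
  comp_aeval_apply s (aeval x) f

theorem totalDegree_aeval_le {s : σ → MvPolynomial τ R} (hs : ∀ i, (s i).totalDegree ≤ 1)
    (f : MvPolynomial σ R) : (aeval s f).totalDegree ≤ f.totalDegree := by
  conv_lhs => rw [f.as_sum, map_sum]
  refine (totalDegree_finsetSum _ _).trans (Finset.sup_le fun u hu => ?_)
  rw [aeval_monomial, algebraMap_eq]
  refine (totalDegree_mul _ _).trans ?_
  rw [totalDegree_C, zero_add, Finsupp.prod]
  refine (totalDegree_finsetProd _ _).trans ((Finset.sum_le_sum fun i _ => ?_).trans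
    (le_totalDegree hu))
  exact (totalDegree_pow _ _).trans (mul_le_of_le_one_right (Nat.zero_le _) (hs i))

end CommSemiring

section CommRing

variable {R σ : Type*} [CommRing R]

theorem dvd_sub_aeval_of_forall_dvd {p : MvPolynomial σ R} {g : σ → MvPolynomial σ R}
    (hg : ∀ i, p ∣ X i - g i) (f : MvPolynomial σ R) : p ∣ f - aeval g f := by
  rw [← Ideal.mem_span_singleton, ← Ideal.Quotient.eq]
  have hcomp : (Ideal.Quotient.mkₐ R (Ideal.span {p})).comp (aeval g) =
      Ideal.Quotient.mkₐ R (Ideal.span {p}) := by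
    ext i
    simpa [Ideal.Quotient.eq, Ideal.mem_span_singleton] using (hg i).neg_right
  exact (DFunLike.congr_fun hcomp f).symm

theorem X_sub_C_dvd_sub_aeval_update [DecidableEq σ] (j : σ) (a : R) (f : MvPolynomial σ R) :
    X j - C a ∣ f - aeval (update X j (C a)) f :=
  dvd_sub_aeval_of_forall_dvd (fun i => by
    rcases eq_or_ne i j with rfl | hij
    · simp
    · simp [Function.update_of_ne hij]) f

theorem X_sub_C_ne_zero [Nontrivial R] (j : σ) (a : R) : (X j - C a : MvPolynomial σ R) ≠ 0 := by
  intro h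
  simpa using congrArg (eval fun _ => a + 1) h

theorem totalDegree_X_sub_C [Nontrivial R] (j : σ) (a : R) :
    (X j - C a : MvPolynomial σ R).totalDegree = 1 := by
  refine le_antisymm ((totalDegree_sub_C_le _ _).trans (totalDegree_X j).le) ?_
  have h := totalDegree_add (X j - C a : MvPolynomial σ R) (C a)
  rwa [sub_add_cancel, totalDegree_X, totalDegree_C, Nat.max_zero] at h

theorem aeval_update_X_C_eq_rename_swap [DecidableEq σ] {f : MvPolynomial σ R}
    (hf : f.IsSymmetric) (j k : σ) (a : R) :
    aeval (update X j (C a)) f = rename (Equiv.swap j k) (aeval (update X k (C a)) f) := by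
  have hswap : (fun i => rename (Equiv.swap j k) (update X k (C a) i)) =
      update X j (C a) ∘ Equiv.swap j k := by
    funext i
    simp only [Function.comp_apply, Function.update_apply, Equiv.swap_apply_def]
    split_ifs <;> simp_all [Equiv.swap_apply_of_ne_of_ne]
  rw [comp_aeval_apply, hswap, ← aeval_rename, hf]

theorem isSymmetric_prod_X_sub_C [Fintype σ] (a : R) :
    (∏ j, (X j - C a) : MvPolynomial σ R).IsSymmetric := fun e => by
  simp only [map_prod, map_sub, rename_X, rename_C]
  exact Equiv.prod_comp e fun j => X j - C a

end CommRing

section IsDomain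

variable {R σ : Type*} [CommRing R] [IsDomain R]

theorem totalDegree_prod_X_sub_C (s : Finset σ) (a : R) :
    (∏ j ∈ s, (X j - C a)).totalDegree = #s := by
  classical
  induction s using Finset.induction_on with
  | empty => simp
  | insert j s hj ih =>
    rw [prod_insert hj, totalDegree_mul_of_isDomain (X_sub_C_ne_zero j a)
      (prod_ne_zero_iff.mpr fun i _ => X_sub_C_ne_zero i a), totalDegree_X_sub_C, ih,
      card_insert_of_notMem hj, add_comm]

theorem prod_X_sub_C_dvd [DecidableEq σ] {f : MvPolynomial σ R} {a : R}
    (hf : ∀ j, aeval (update X j (C a)) f = 0) (s : Finset σ) : ∏ j ∈ s, (X j - C a) ∣ f := by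
  induction s using Finset.induction_on with
  | empty => simp
  | insert j s hj ih =>
    obtain ⟨u, rfl⟩ := ih
    have hfixed : aeval (update X j (C a)) (∏ i ∈ s, (X i - C a)) = ∏ i ∈ s, (X i - C a) := by
      refine (map_prod _ _ _).trans (prod_congr rfl fun i hi => ?_)
      rw [map_sub, aeval_X, aeval_C, Function.update_of_ne (ne_of_mem_of_not_mem hi hj),
        algebraMap_eq]
    have hu : aeval (update X j (C a)) u = 0 := by
      have h := hf j
      rwa [map_mul, hfixed, mul_eq_zero,
        or_iff_right (prod_ne_zero_iff.mpr fun i _ => X_sub_C_ne_zero i a)] at h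
    obtain ⟨v, rfl⟩ := sub_zero u ▸ hu ▸ X_sub_C_dvd_sub_aeval_update j a u
    rw [prod_insert hj]
    exact ⟨v, by ring⟩

theorem IsSymmetric.of_mul_left {p f : MvPolynomial σ R} (hp : p.IsSymmetric) (hp0 : p ≠ 0)
    (hpf : (p * f).IsSymmetric) : f.IsSymmetric := fun e =>
  mul_left_cancel₀ hp0 (by simpa only [map_mul, hp e] using hpf e)

end IsDomain

end MvPolynomial

section Nodes

variable {R : Type*} [CommRing R]

noncomputable def powPoint {n : ℕ} (t : R) (μ : Fin n → ℕ) : Fin n → R :=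
  fun i => t ^ (μ i + (n - 1 - i))

theorem qPoint_eq_powPoint (n : ℕ) (q : ℝ) (μ : Fin n → ℕ) :
    qPoint n q μ = powPoint (q ^ 2) μ :=
  funext fun _ => pow_mul _ _ _

theorem strictAnti_add_sub_of_antitone {n : ℕ} {μ : Fin n → ℕ} (hμ : Antitone μ) :
    StrictAnti fun i : Fin n => μ i + (n - 1 - i) := fun i j hij => by
  have := hμ hij.le
  have : (i : ℕ) < j := hij
  have := j.isLt
  simp only
  omega

theorem powPoint_injective {n : ℕ} {t : R} (ht : Injective (t ^ · : ℕ → R)) {μ : Fin n → ℕ}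
    (hμ : Antitone μ) : Injective (powPoint t μ) :=
  ht.comp (strictAnti_add_sub_of_antitone hμ).injective

theorem smul_powPoint_add_one {n : ℕ} (c t : R) (μ : Fin n → ℕ) :
    c • powPoint t (μ + 1) = (c * t) • powPoint t μ := by
  funext i
  simp only [Pi.smul_apply, powPoint, Pi.add_apply, Pi.one_apply, smul_eq_mul]
  rw [add_right_comm, pow_succ]
  ring

theorem smul_powPoint_snoc_zero {m : ℕ} (c t : R) (μ : Fin m → ℕ) :
    c • powPoint t (Fin.snoc μ 0 : Fin (m + 1) → ℕ) = Fin.snoc ((c * t) • powPoint t μ) c := by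
  funext i
  induction i using Fin.lastCases with
  | last => simp [powPoint]
  | cast i =>
    have hexp : m + 1 - 1 - (i : ℕ) = m - 1 - i + 1 := by omega
    simp only [Pi.smul_apply, powPoint, Fin.snoc_castSucc, Fin.val_castSucc, hexp, smul_eq_mul]
    ring

theorem antitone_snoc_zero {m : ℕ} {μ : Fin m → ℕ} (hμ : Antitone μ) :
    Antitone (Fin.snoc μ 0 : Fin (m + 1) → ℕ) := by
  intro i j hij
  induction j using Fin.lastCases with
  | last => simp
  | cast j =>
    induction i using Fin.lastCases with
    | last => exact absurd hij (Fin.castSucc_lt_last j).not_ge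
    | cast i => simpa using hμ (Fin.castSucc_le_castSucc_iff.mp hij)

end Nodes

section LastVariable

variable {R : Type*} [CommRing R] {m : ℕ}

local notation "snocXC" a => (Fin.snoc X (C a) : Fin (m + 1) → MvPolynomial (Fin m) R)

theorem eval_aeval_snoc (x : Fin m → R) (a : R) (f : MvPolynomial (Fin (m + 1)) R) :
    eval x (aeval (snocXC a) f) = eval (Fin.snoc x a) f := by
  rw [eval_aeval]
  congr 2 with i
  induction i using Fin.lastCases <;> simp

theorem totalDegree_aeval_snoc_le (a : R) (f : MvPolynomial (Fin (m + 1)) R) :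
    (aeval (snocXC a) f).totalDegree ≤ f.totalDegree := by
  refine totalDegree_aeval_le (fun i => ?_) f
  induction i using Fin.lastCases with
  | last => simp
  | cast i =>
    rw [Fin.snoc_castSucc]
    exact (totalDegree_monomial_le _ _).trans_eq (by simp)

theorem rename_castSucc_aeval_snoc (a : R) (f : MvPolynomial (Fin (m + 1)) R) :
    rename Fin.castSucc (aeval (snocXC a) f) = aeval (update X (Fin.last m) (C a)) f := by
  rw [comp_aeval_apply]
  congr 2 with i
  induction i using Fin.lastCases with
  | last => simp
  | cast i => simp

theorem isSymmetric_aeval_snoc {f : MvPolynomial (Fin (m + 1)) R} (hf : f.IsSymmetric) (a : R) :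
    (aeval (snocXC a) f).IsSymmetric := by
  intro e
  let e' : Equiv.Perm (Fin (m + 1)) := finSuccEquivLast.symm.permCongr e.optionCongr
  have he : (fun i => rename e ((snocXC a) i)) = (snocXC a) ∘ e' := by
    funext i
    induction i using Fin.lastCases <;> simp [e', Equiv.permCongr_apply]
  rw [comp_aeval_apply, he, ← aeval_rename, hf]

end LastVariable

section Vanishing

variable {R : Type*} [CommRing R] [IsDomain R] {t : R}

theorem eval_smul_powPoint_prod_X_sub_C_ne_zero (ht : Injective (t ^ · : ℕ → R)) {n : ℕ}
    {c : R} (hc : c ≠ 0) (μ : Fin n → ℕ) :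
    eval ((c * t) • powPoint t μ) (∏ j, (X j - C c)) ≠ 0 := by
  simp only [map_prod, map_sub, eval_X, eval_C, Pi.smul_apply, smul_eq_mul, powPoint,
    prod_ne_zero_iff, mem_univ, true_implies]
  intro j
  rw [mul_assoc, ← pow_succ', ← mul_sub_one]
  exact mul_ne_zero hc
    (sub_ne_zero.mpr fun h => Nat.succ_ne_zero _ (ht (h.trans (pow_zero t).symm)))

theorem eq_zero_of_forall_eval_smul_powPoint_eq_zero (ht : Injective (t ^ · : ℕ → R))
    {n d : ℕ} {c : R} (hc : c ≠ 0) {f : MvPolynomial (Fin n) R} (hf : f.IsSymmetric)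
    (hdeg : f.totalDegree ≤ d)
    (hvan : ∀ μ : Fin n → ℕ, Antitone μ → ∑ i, μ i ≤ d → eval (c • powPoint t μ) f = 0) :
    f = 0 := by
  have ht0 : t ≠ 0 := fun h => absurd (ht (by simp [h] : t ^ 1 = t ^ 2)) (by norm_num)
  induction n generalizing d c with
  | zero =>
    rw [eq_C_of_isEmpty f] at hvan ⊢
    simpa using hvan 0 (fun i => i.elim0) (by simp)
  | succ m ih =>
  induction d using Nat.strong_induction_on generalizing c f with
  | _ d ihd =>
  have hct : c * t ≠ 0 := mul_ne_zero hc ht0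
  have hlast : aeval (update X (Fin.last m) (C c)) f = 0 := by
    rw [← rename_castSucc_aeval_snoc, ih hct (isSymmetric_aeval_snoc hf c)
      ((totalDegree_aeval_snoc_le c f).trans hdeg) fun μ hμ hsum => ?_, map_zero]
    rw [eval_aeval_snoc, ← smul_powPoint_snoc_zero]
    exact hvan _ (antitone_snoc_zero hμ) (by simpa [Fin.sum_univ_castSucc] using hsum)
  obtain ⟨g, rfl⟩ := prod_X_sub_C_dvd (fun j => by
    rw [aeval_update_X_C_eq_rename_swap hf j (Fin.last m), hlast, map_zero]) univ
  rcases eq_or_ne g 0 with rfl | hg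
  · exact mul_zero _
  have hP : (∏ j : Fin (m + 1), (X j - C c)) ≠ 0 :=
    prod_ne_zero_iff.mpr fun j _ => X_sub_C_ne_zero j c
  rw [totalDegree_mul_of_isDomain hP hg, totalDegree_prod_X_sub_C, card_univ,
    Fintype.card_fin] at hdeg
  refine absurd (ihd (d - (m + 1)) (by omega) hct
    ((isSymmetric_prod_X_sub_C c).of_mul_left hP hf) (by omega) fun μ hμ hsum => ?_) hg
  have h := hvan (μ + 1) (hμ.add_const 1) (by simp [sum_add_distrib]; omega)
  rw [smul_powPoint_add_one, eval_mul, mul_eq_zero] at h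
  exact h.resolve_left (eval_smul_powPoint_prod_X_sub_C_ne_zero ht hc μ)

end Vanishing

theorem Fintype.exists_lt_of_sum_le_of_ne {ι : Type*} [Fintype ι] {μ ν : ι → ℕ}
    (hsum : ∑ i, μ i ≤ ∑ i, ν i) (hne : μ ≠ ν) : ∃ k, μ k < ν k := by
  by_contra! h
  have heq := (sum_eq_sum_iff_of_le fun i _ => h i).mp
    (le_antisymm (sum_le_sum fun i _ => h i) hsum)
  exact hne (funext fun i => (heq i (mem_univ i)).symm)

theorem prod_Ioi_sub_ne_zero {ι R : Type*} [Fintype ι] [LinearOrder ι] [LocallyFiniteOrderTop ι]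
    [CommRing R] [IsDomain R] {x : ι → R} (hx : Injective x) :
    ∏ i, ∏ j ∈ Ioi i, (x i - x j) ≠ 0 :=
  prod_ne_zero_iff.mpr fun _ _ => prod_ne_zero_iff.mpr fun _ hj =>
    sub_ne_zero.mpr (hx.ne (mem_Ioi.mp hj).ne)

theorem Matrix.det_eq_zero_of_lowerLeft_eq_zero {R : Type*} [CommRing R] {n : ℕ}
    (A : Matrix (Fin n) (Fin n) R) (k : Fin n) (hA : ∀ i j, j ≤ k → k ≤ i → A i j = 0) :
    A.det = 0 := by
  rw [Matrix.det_apply]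
  refine sum_eq_zero fun σ _ => ?_
  -- pigeonhole: `σ` cannot map the `k + 1` indices `≤ k` into the `k` indices `< k`
  obtain ⟨j, hjk, hkσ⟩ : ∃ j ≤ k, k ≤ σ j := by
    by_contra! h
    have := card_le_card_of_injOn σ (fun j hj => mem_Iio.mpr (h j (mem_Iic.mp hj)))
      σ.injective.injOn
    simp at this
  exact smul_eq_zero_of_right _ (prod_eq_zero (mem_univ j) (hA _ _ hjk hkσ))

section FactorialMatrix

variable {R : Type*} [CommRing R] {n : ℕ} {t : R}

def factorialMatrix (t : R) (ν : Fin n → ℕ) (x : Fin n → R) : Matrix (Fin n) (Fin n) R :=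
  Matrix.of fun i j => ∏ m ∈ range (ν j + (n - 1 - j)), (x i - t ^ m)

theorem eval_mul_prod_sub_eq_det {ν : Fin n → ℕ} {S : MvPolynomial (Fin n) R}
    (hS : S * ∏ i : Fin n, ∏ j ∈ Ioi i, (X i - X j) =
      (Matrix.of fun i j : Fin n => ∏ m ∈ range (ν j + (n - 1 - j)), (X i - C (t ^ m))).det)
    (x : Fin n → R) :
    eval x S * ∏ i : Fin n, ∏ j ∈ Ioi i, (x i - x j) = (factorialMatrix t ν x).det := by
  have h := congrArg (eval x) hS
  rw [map_mul, RingHom.map_det] at h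
  simpa [map_prod, factorialMatrix, RingHom.mapMatrix_apply, Matrix.map] using h

theorem prod_range_pow_sub_pow_eq_zero_s6 (t : R) {a b : ℕ} (h : a < b) :
    ∏ m ∈ range b, (t ^ a - t ^ m) = 0 :=
  prod_eq_zero (mem_range.mpr h) (sub_self _)

theorem prod_range_pow_sub_pow_ne_zero [IsDomain R] (ht : Injective (t ^ · : ℕ → R)) {a b : ℕ}
    (h : b ≤ a) : ∏ m ∈ range b, (t ^ a - t ^ m) ≠ 0 :=
  prod_ne_zero_iff.mpr fun m hm => sub_ne_zero.mpr fun he => by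
    have := ht he
    have := mem_range.mp hm
    omega

theorem det_factorialMatrix_powPoint_eq_zero {μ ν : Fin n → ℕ} (hμ : Antitone μ)
    (hν : Antitone ν) {k : Fin n} (hk : μ k < ν k) :
    (factorialMatrix t ν (powPoint t μ)).det = 0 :=
  Matrix.det_eq_zero_of_lowerLeft_eq_zero _ k fun i j hjk hki => by
    have := hμ hki
    have := hν hjk
    have : (j : ℕ) ≤ k := hjk
    have : (k : ℕ) ≤ i := hki
    have := i.isLt
    exact prod_range_pow_sub_pow_eq_zero_s6 t (by omega)

theorem det_factorialMatrix_powPoint_ne_zero [IsDomain R] (ht : Injective (t ^ · : ℕ → R))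
    {ν : Fin n → ℕ} (hν : Antitone ν) : (factorialMatrix t ν (powPoint t ν)).det ≠ 0 := by
  have htri : (factorialMatrix t ν (powPoint t ν)).IsUpperTriangular := fun i j hji =>
    prod_range_pow_sub_pow_eq_zero_s6 t (strictAnti_add_sub_of_antitone hν hji)
  rw [Matrix.det_of_isUpperTriangular htri]
  exact prod_ne_zero_iff.mpr fun i _ => prod_range_pow_sub_pow_ne_zero ht le_rfl

end FactorialMatrix

theorem qfactSchur_unique_up_to_constant_general (n : ℕ) (q : ℝ)
    (hq0 : 0 < q) (hq1 : q < 1) (ν : Fin n → ℕ) (hν : Antitone ν)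
    (S : MvPolynomial (Fin n) ℝ)
    (hS : S * ∏ i : Fin n, ∏ j ∈ Finset.Ioi i, (X i - X j) =
        Matrix.det (Matrix.of fun i j : Fin n =>
          ∏ m ∈ Finset.range (ν j + (n - 1 - (j : ℕ))), (X i - C ((q ^ 2) ^ m))))
    (hSsym : S.IsSymmetric) (hSdeg : S.totalDegree = ∑ i, ν i)
    (p : MvPolynomial (Fin n) ℝ) (hpsym : p.IsSymmetric)
    (hpdeg : p.totalDegree ≤ ∑ i, ν i)
    (hvanish : ∀ μ : Fin n → ℕ, Antitone μ → ∑ i, μ i ≤ ∑ i, ν i → μ ≠ ν →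
        eval (qPoint n q μ) p = 0) :
    ∃ c : ℝ, p = c • S := by
  have ht : Injective ((q ^ 2) ^ · : ℕ → ℝ) :=
    pow_right_injective₀ (by positivity) (by nlinarith)
  have hevalS := eval_mul_prod_sub_eq_det hS
  simp only [qPoint_eq_powPoint] at hvanish
  set x := powPoint (q ^ 2) ν
  have hSx : eval x S ≠ 0 := left_ne_zero_of_mul
    ((hevalS x).trans_ne (det_factorialMatrix_powPoint_ne_zero ht hν))
  set c := eval x p / eval x S
  refine ⟨c, sub_eq_zero.mp (eq_zero_of_forall_eval_smul_powPoint_eq_zero ht one_ne_zero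
    (d := ∑ i, ν i) (hpsym.sub (hSsym.smul c)) ?_ fun μ hμ hsum => ?_)⟩
  · exact (totalDegree_sub _ _).trans (max_le hpdeg ((totalDegree_smul_le _ _).trans hSdeg.le))
  rw [one_smul, map_sub, smul_eval]
  rcases eq_or_ne μ ν with rfl | hμν
  · rw [div_mul_cancel₀ _ hSx, sub_self]
  obtain ⟨k, hk⟩ := Fintype.exists_lt_of_sum_le_of_ne hsum hμν
  have hSμ : eval (powPoint (q ^ 2) μ) S = 0 :=
    eq_zero_of_ne_zero_of_mul_right_eq_zero (prod_Ioi_sub_ne_zero (powPoint_injective ht hμ))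
      ((hevalS _).trans (det_factorialMatrix_powPoint_eq_zero hμ hν hk))
  rw [hvanish μ hμ hsum hμν, hSμ, mul_zero, sub_zero]

/-- uniqueness up to a constant. Let `S` be the symmetric polynomial of
total degree `|ν|` representing the q²-factorial Schur polynomial `𝔰_ν(·; q²)`, i.e.
`S · ∏_{i<j}(X_i − X_j) = det( ∏_{m=0}^{ν_j+n−j−1} (X_i − (q²)^m) )`.
If `p` is a symmetric polynomial of total degree at most `|ν|` vanishing at all points
`q^{2(μ+δ)}` for partitions `μ` with `|μ| ≤ |ν|`, `μ ≠ ν`, then `p = c • S` for some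
constant `c ∈ ℝ`. -/
theorem qfactSchur_unique_up_to_constant (n : ℕ) (hn : 1 ≤ n) (q : ℝ)
    (hq0 : 0 < q) (hq1 : q < 1) (ν : Fin n → ℕ) (hν : Antitone ν)
    (S : MvPolynomial (Fin n) ℝ)
    (hS : S * ∏ i : Fin n, ∏ j ∈ Finset.Ioi i, (X i - X j) =
        Matrix.det (Matrix.of fun i j : Fin n =>
          ∏ m ∈ Finset.range (ν j + (n - 1 - (j : ℕ))), (X i - C ((q ^ 2) ^ m))))
    (hSsym : S.IsSymmetric) (hSdeg : S.totalDegree = ∑ i, ν i)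
    (p : MvPolynomial (Fin n) ℝ) (hpsym : p.IsSymmetric)
    (hpdeg : p.totalDegree ≤ ∑ i, ν i)
    (hvanish : ∀ μ : Fin n → ℕ, Antitone μ → ∑ i, μ i ≤ ∑ i, ν i → μ ≠ ν →
        eval (qPoint n q μ) p = 0) :
    ∃ c : ℝ, p = c • S :=
  qfactSchur_unique_up_to_constant_general n q hq0 hq1 ν hν S hS hSsym hSdeg p hpsym hpdeg hvanish
end
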